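/- For every natural number n, the function J_n defined by the everywhere-convergent series J_n(x) = Σ_{r=0}^∞ (-1)^r / ( r! (n+r)! ) (x/2)^(2r+n) is twice differentiable on ℝ and satisfies Bessel's differential equation x^2 · J_n''(x) + x · J_n'(x) + (x^2 - n^2) · J_n(x) = 0 for every real x. -/

import Mathlib

/-!
Write `J_n(x) = ∑ b_r x^(2r+n)` with `b_r = (-1)^r / (r! (n+r)! 2^(2r+n))`. Since `|b_r| ≤ 1/r!`,
the series and its termwise derivatives are dominated on bounded sets, so `J_n` may be
differentiated termwise twice. The Euler operator `x²D² + xD` multiplies `x^k` by `k²`, hence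
`x² J'' + x J' - n² J = ∑ A_r` with `A_r = ((2r+n)² - n²) b_r x^(2r+n)`, and `A_0 = 0`.
The recursion `4 (r+1) (n+r+1) b_(r+1) = -b_r` says `x² b_r x^(2r+n) = -A_(r+1)`, so the remaining
term `x² J` cancels `∑ A_r` after an index shift.
-/

open Metric
open scoped Nat

section TermwiseDerivative

variable {ι 𝕜 : Type*} [RCLike 𝕜] {b : ι → 𝕜} {e : ι → ℕ}

lemma summable_mul_pow_of_summable_norm (hb : ∀ R : ℝ, Summable fun i => ‖b i‖ * R ^ e i)
    (x : 𝕜) : Summable fun i => b i * x ^ e i :=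
  .of_norm_bounded (hb ‖x‖) fun i => by rw [norm_mul, norm_pow]

lemma summable_norm_mul_cast_mul_pow_sub_one (hb : ∀ R : ℝ, Summable fun i => ‖b i‖ * R ^ e i)
    (R : ℝ) : Summable fun i => ‖b i * e i‖ * R ^ (e i - 1) := by
  set S := max |R| 1
  have hS : 1 ≤ S := le_max_right _ _
  refine .of_norm_bounded (hb (2 * S)) fun i => ?_
  have he : (e i : ℝ) ≤ 2 ^ e i := by exact_mod_cast (Nat.lt_two_pow_self).le
  have hR : |R| ^ (e i - 1) ≤ S ^ e i :=
    (pow_le_pow_left₀ (abs_nonneg R) (le_max_left _ _) _).trans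
      (pow_le_pow_right₀ hS (Nat.sub_le _ _))
  calc ‖‖b i * e i‖ * R ^ (e i - 1)‖ = ‖b i‖ * (e i * |R| ^ (e i - 1)) := by
        simp [mul_assoc]
    _ ≤ ‖b i‖ * (2 ^ e i * S ^ e i) := by gcongr
    _ = ‖b i‖ * (2 * S) ^ e i := by rw [mul_pow]

theorem hasDerivAt_tsum_mul_pow (hb : ∀ R : ℝ, Summable fun i => ‖b i‖ * R ^ e i) (x : 𝕜) :
    HasDerivAt (fun y => ∑' i, b i * y ^ e i) (∑' i, b i * e i * x ^ (e i - 1)) x := by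
  have hx : x ∈ ball (0 : 𝕜) (‖x‖ + 1) := by simp
  have hd : ∀ i y, HasDerivAt (fun y => b i * y ^ e i) (b i * e i * y ^ (e i - 1)) y :=
    fun i y => by simpa [mul_assoc] using (hasDerivAt_pow (e i) y).const_mul (b i)
  have hbound : ∀ i, ∀ y ∈ ball (0 : 𝕜) (‖x‖ + 1),
      ‖b i * e i * y ^ (e i - 1)‖ ≤ ‖b i * e i‖ * (‖x‖ + 1) ^ (e i - 1) := by
    intro i y hy
    rw [mem_ball_zero_iff] at hy
    rw [norm_mul, norm_pow]
    gcongr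
  exact hasDerivAt_tsum_of_isPreconnected
    (summable_norm_mul_cast_mul_pow_sub_one hb (‖x‖ + 1)) isOpen_ball
    (convex_ball _ _).isPreconnected (fun i y _ => hd i y) hbound hx
    (summable_mul_pow_of_summable_norm hb x) hx

end TermwiseDerivative

lemma sq_mul_pow_sub_two_add_mul_pow_sub_one {R : Type*} [CommRing R] (k : ℕ) (x : R) :
    x ^ 2 * ((k : R) * (k - 1 : ℕ) * x ^ (k - 1 - 1)) + x * ((k : R) * x ^ (k - 1)) =
      (k : R) ^ 2 * x ^ k := by
  -- truncated subtraction is harmless: the factor `k` or `k - 1` vanishes where it truncates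
  match k with
  | 0 => simp
  | 1 => simp
  | k + 2 => push_cast; ring

noncomputable def besselCoeff (n r : ℕ) : ℝ := (-1) ^ r / (r ! * (n + r)! * 2 ^ (2 * r + n))

lemma besselCoeff_succ (n r : ℕ) :
    4 * (r + 1) * (n + r + 1) * besselCoeff n (r + 1) = -besselCoeff n r := by
  simp only [besselCoeff, Nat.factorial_succ, ← Nat.add_assoc]
  push_cast
  field_simp
  ring

lemma abs_besselCoeff_le (n r : ℕ) : |besselCoeff n r| ≤ 1 / r ! := by
  rw [besselCoeff, abs_div, abs_pow, abs_neg, abs_one, one_pow, abs_of_pos (by positivity)]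
  gcongr
  rw [mul_assoc]
  exact le_mul_of_one_le_right (by positivity)
    (one_le_mul_of_one_le_of_one_le (Nat.one_le_cast.mpr (n + r).factorial_pos)
      (one_le_pow₀ one_le_two))

lemma summable_norm_besselCoeff_mul_pow (n : ℕ) (R : ℝ) :
    Summable fun r => ‖besselCoeff n r‖ * R ^ (2 * r + n) := by
  refine .of_norm_bounded ((Real.summable_pow_div_factorial (R ^ 2)).mul_left (|R| ^ n))
    fun r => ?_
  calc ‖‖besselCoeff n r‖ * R ^ (2 * r + n)‖ = |besselCoeff n r| * |R| ^ (2 * r + n) := by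
        simp
    _ ≤ 1 / r ! * |R| ^ (2 * r + n) := by gcongr; exact abs_besselCoeff_le n r
    _ = |R| ^ n * ((R ^ 2) ^ r / r !) := by rw [pow_add, pow_mul, sq_abs]; ring

lemma bessel_ode_tsum_besselCoeff_mul_pow (n : ℕ) (x : ℝ) :
    x ^ 2 * ∑' r, besselCoeff n r * ((2 * r + n : ℕ) : ℝ) * ((2 * r + n - 1 : ℕ) : ℝ) *
        x ^ (2 * r + n - 1 - 1) +
      x * ∑' r, besselCoeff n r * ((2 * r + n : ℕ) : ℝ) * x ^ (2 * r + n - 1) +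
      (x ^ 2 - n ^ 2) * ∑' r, besselCoeff n r * x ^ (2 * r + n) = 0 := by
  have hb := summable_norm_besselCoeff_mul_pow n
  have hb' := summable_norm_mul_cast_mul_pow_sub_one hb
  obtain ⟨S₀, h₀⟩ := summable_mul_pow_of_summable_norm hb x
  obtain ⟨S₁, h₁⟩ := summable_mul_pow_of_summable_norm hb' x
  obtain ⟨S₂, h₂⟩ := summable_mul_pow_of_summable_norm
    (summable_norm_mul_cast_mul_pow_sub_one hb') x
  set A : ℕ → ℝ := fun r =>
    (((2 * r + n : ℕ) : ℝ) ^ 2 - n ^ 2) * (besselCoeff n r * x ^ (2 * r + n))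
  have hA : HasSum A (x ^ 2 * S₂ + x * S₁ - n ^ 2 * S₀) := by
    refine (((h₂.mul_left (x ^ 2)).add (h₁.mul_left x)).sub
      (h₀.mul_left ((n : ℝ) ^ 2))).congr_fun fun r => ?_
    linear_combination -besselCoeff n r * sq_mul_pow_sub_two_add_mul_pow_sub_one (2 * r + n) x
  have hA_succ : HasSum (fun r => A (r + 1)) (-(x ^ 2 * S₀)) := by
    refine (h₀.mul_left (x ^ 2)).neg.congr_fun fun r => ?_
    have hpow : x ^ (2 * (r + 1) + n) = x ^ 2 * x ^ (2 * r + n) := by ring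
    simp only [A, hpow]
    push_cast
    linear_combination x ^ 2 * x ^ (2 * r + n) * besselCoeff_succ n r
  have hA0 : A 0 = 0 := by simp [A]
  have := hA_succ.unique ((hasSum_nat_add_iff' 1).mpr hA)
  rw [h₀.tsum_eq, h₁.tsum_eq, h₂.tsum_eq]
  simp only [Finset.sum_range_one, hA0, sub_zero] at this
  linear_combination -this

/-- For every natural number `n`, the Bessel function of the first kind
`J_n(x) = Σ_{r=0}^∞ (-1)^r / (r! (n+r)!) (x/2)^(2r+n)` is twice differentiable on `ℝ`
and satisfies Bessel's differential equation
`x^2 J_n''(x) + x J_n'(x) + (x^2 - n^2) J_n(x) = 0` for every real `x`. -/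
theorem bessel_function_solves_bessel_equation (n : ℕ) :
    let J : ℝ → ℝ := fun x =>
      ∑' r : ℕ, (-1 : ℝ) ^ r / ((r.factorial : ℝ) * ((n + r).factorial : ℝ)) * (x / 2) ^ (2 * r + n)
    (∀ x : ℝ, DifferentiableAt ℝ J x) ∧
    (∀ x : ℝ, DifferentiableAt ℝ (deriv J) x) ∧
    ∀ x : ℝ, x ^ 2 * deriv (deriv J) x + x * deriv J x + (x ^ 2 - (n : ℝ) ^ 2) * J x = 0 := by
  intro J
  have hJ : J = fun x => ∑' r, besselCoeff n r * x ^ (2 * r + n) := by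
    funext x
    refine tsum_congr fun r => ?_
    rw [besselCoeff, div_pow]
    field_simp
  have hb := summable_norm_besselCoeff_mul_pow n
  have hJ' : ∀ x, HasDerivAt J _ x := hJ ▸ hasDerivAt_tsum_mul_pow hb
  have hJ'' := hasDerivAt_tsum_mul_pow (summable_norm_mul_cast_mul_pow_sub_one hb)
  rw [← funext fun x => (hJ' x).deriv] at hJ''
  refine ⟨fun x => (hJ' x).differentiableAt, fun x => (hJ'' x).differentiableAt, fun x => ?_⟩
  rw [(hJ'' x).deriv, (hJ' x).deriv, hJ]
  exact bessel_ode_tsum_besselCoeff_mul_pow n x
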